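/- If 𝔛 = (X̂_1,...,X̂_n) is an optimal multiple alignment (a global minimizer of g_n(𝔛) = (1/n²)∑_{i,j}‖X̂_i − X̂_j‖² over all alignments of the sample), then the partition represented by the mean M_𝔛 = (1/n)∑_i X̂_i is a mean partition, i.e., a global minimizer of the Fréchet function F_n(Z) = (1/n)∑_i δ(X_i, Z)². Moreover, every mean partition arises this way; i.e., the map 𝔛 ↦ π(M_𝔛) from optimal alignments to mean partitions is surjective. (Equivalence of mean partitions and optimal multiple alignments) -/

import Mathlib

/-!
For an alignment `𝔛` write `S(𝔛) = ∑ ‖X̂ᵢ - M_𝔛‖²`. Expanding squares gives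
`∑ᵢⱼ ‖X̂ᵢ - X̂ⱼ‖² = 2n S(𝔛)` and `∑ ‖X̂ᵢ - Z‖² = S(𝔛) + n ‖M_𝔛 - Z‖²`, so optimal alignments are
those of minimal `S`. Every alignment satisfies `n F_n(M_𝔛) ≤ S(𝔛)`, and aligning the sample
optimally to any `Z` produces an alignment with `S ≤ n F_n(Z)`; hence `S` and `n F_n` have the
same minimum. If `M` is a mean partition and `𝔛` is aligned to `M`, this squeeze forces the
defect `n ‖M_𝔛 - M‖²` to vanish, so `M_𝔛 = M`.
-/

open Finset

noncomputable section

def LP (l m : ℕ) : Set (Matrix (Fin l) (Fin m) ℝ) :=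
  {X | (∀ k j, X k j ∈ Set.Icc (0:ℝ) 1) ∧ ∀ j, ∑ k, X k j = 1}

def act {l m : ℕ} (σ : Equiv.Perm (Fin l)) (X : Matrix (Fin l) (Fin m) ℝ) :
    Matrix (Fin l) (Fin m) ℝ :=
  fun k j => X (σ⁻¹ k) j

def orbit {l m : ℕ} (X : Matrix (Fin l) (Fin m) ℝ) : Set (Matrix (Fin l) (Fin m) ℝ) :=
  {Y | ∃ σ : Equiv.Perm (Fin l), act σ X = Y}

def finner {l m : ℕ} (A B : Matrix (Fin l) (Fin m) ℝ) : ℝ :=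
  ∑ k, ∑ j, A k j * B k j

def fnorm {l m : ℕ} (A : Matrix (Fin l) (Fin m) ℝ) : ℝ :=
  Real.sqrt (finner A A)

def pdist {l m : ℕ} (A B : Set (Matrix (Fin l) (Fin m) ℝ)) : ℝ :=
  sInf {d | ∃ X ∈ A, ∃ Y ∈ B, d = fnorm (X - Y)}

def mean {E : Type*} [AddCommGroup E] [Module ℝ E] {n : ℕ} (x : Fin n → E) : E :=
  (n : ℝ)⁻¹ • ∑ j, x j

section InnerProductSpace

variable {E : Type*} [NormedAddCommGroup E] [InnerProductSpace ℝ E] {n : ℕ} [NeZero n]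

theorem sum_sub_mean (x : Fin n → E) : ∑ i, (x i - mean x) = 0 := by
  rw [sum_sub_distrib, sum_const, card_univ, Fintype.card_fin, ← Nat.cast_smul_eq_nsmul ℝ, mean,
    smul_inv_smul₀ (NeZero.ne _), sub_self]

theorem sum_norm_sub_sq (x : Fin n → E) (c : E) :
    ∑ i, ‖x i - c‖ ^ 2 = ∑ i, ‖x i - mean x‖ ^ 2 + n * ‖mean x - c‖ ^ 2 := by
  have expand (i : Fin n) : ‖x i - c‖ ^ 2 =
      ‖x i - mean x‖ ^ 2 + 2 * inner ℝ (x i - mean x) (mean x - c) + ‖mean x - c‖ ^ 2 := by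
    rw [← norm_add_sq_real, sub_add_sub_cancel]
  simp only [expand, sum_add_distrib, ← mul_sum, ← sum_inner, sum_sub_mean, inner_zero_left,
    mul_zero, add_zero, sum_const, card_univ, Fintype.card_fin, nsmul_eq_mul]

theorem sum_sum_norm_sub_sq (x : Fin n → E) :
    ∑ i, ∑ j, ‖x i - x j‖ ^ 2 = 2 * n * ∑ i, ‖x i - mean x‖ ^ 2 := by
  have row (i : Fin n) : ∑ j, ‖x i - x j‖ ^ 2 =
      ∑ j, ‖x j - mean x‖ ^ 2 + n * ‖x i - mean x‖ ^ 2 := by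
    simp only [norm_sub_rev (x i), sum_norm_sub_sq x (x i)]
  simp only [row, sum_add_distrib, ← mul_sum, sum_const, card_univ, Fintype.card_fin,
    nsmul_eq_mul]
  ring

end InnerProductSpace

section Frobenius

variable {l m : ℕ}

def flat : Matrix (Fin l) (Fin m) ℝ →ₗ[ℝ] EuclideanSpace ℝ (Fin l × Fin m) where
  toFun A := WithLp.toLp 2 fun p => A p.1 p.2
  map_add' _ _ := rfl
  map_smul' _ _ := rfl

theorem fnorm_eq_norm_flat (A : Matrix (Fin l) (Fin m) ℝ) : fnorm A = ‖flat A‖ := by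
  rw [fnorm, finner, EuclideanSpace.norm_eq, Fintype.sum_prod_type]
  simp only [Real.norm_eq_abs, sq, abs_mul_abs_self]
  rfl

theorem flat_injective : Function.Injective (flat : Matrix (Fin l) (Fin m) ℝ →ₗ[ℝ] _) :=
  fun _ _ h => Matrix.ext fun k j => congrArg (fun v => v (k, j)) h

theorem fnorm_eq_zero {A : Matrix (Fin l) (Fin m) ℝ} : fnorm A = 0 ↔ A = 0 := by
  rw [fnorm_eq_norm_flat, norm_eq_zero, map_eq_zero_iff _ flat_injective]

theorem fnorm_nonneg (A : Matrix (Fin l) (Fin m) ℝ) : 0 ≤ fnorm A :=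
  Real.sqrt_nonneg _

theorem fnorm_sub (A B : Matrix (Fin l) (Fin m) ℝ) : fnorm (A - B) = ‖flat A - flat B‖ := by
  rw [fnorm_eq_norm_flat, map_sub]

theorem flat_mean {n : ℕ} (A : Fin n → Matrix (Fin l) (Fin m) ℝ) :
    flat (mean A) = mean fun i => flat (A i) := by
  simp only [mean, map_smul, map_sum]

variable {n : ℕ} [NeZero n]

theorem sum_fnorm_sub_sq (A : Fin n → Matrix (Fin l) (Fin m) ℝ) (C : Matrix (Fin l) (Fin m) ℝ) :
    ∑ i, fnorm (A i - C) ^ 2 = ∑ i, fnorm (A i - mean A) ^ 2 + n * fnorm (mean A - C) ^ 2 := by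
  simp only [fnorm_sub, flat_mean]
  exact sum_norm_sub_sq _ _

theorem sum_sum_fnorm_sub_sq (A : Fin n → Matrix (Fin l) (Fin m) ℝ) :
    ∑ i, ∑ j, fnorm (A i - A j) ^ 2 = 2 * n * ∑ i, fnorm (A i - mean A) ^ 2 := by
  simp only [fnorm_sub, flat_mean]
  exact sum_sum_norm_sub_sq _

theorem sum_fnorm_sub_mean_sq_le (A : Fin n → Matrix (Fin l) (Fin m) ℝ)
    (C : Matrix (Fin l) (Fin m) ℝ) :
    ∑ i, fnorm (A i - mean A) ^ 2 ≤ ∑ i, fnorm (A i - C) ^ 2 := by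
  rw [sum_fnorm_sub_sq A C]
  exact le_add_of_nonneg_right (by positivity)

theorem alignment_cost_eq (A : Fin n → Matrix (Fin l) (Fin m) ℝ) :
    ((n : ℝ) ^ 2)⁻¹ * ∑ i, ∑ j, fnorm (A i - A j) ^ 2 =
      2 / n * ∑ i, fnorm (A i - mean A) ^ 2 := by
  have : (n : ℝ) ≠ 0 := NeZero.ne _
  rw [sum_sum_fnorm_sub_sq]
  field_simp

end Frobenius

section Orbit

variable {l m : ℕ}

theorem act_one (X : Matrix (Fin l) (Fin m) ℝ) : act 1 X = X := rfl

theorem act_act (σ τ : Equiv.Perm (Fin l)) (X : Matrix (Fin l) (Fin m) ℝ) :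
    act σ (act τ X) = act (σ * τ) X := rfl

theorem act_sub (σ : Equiv.Perm (Fin l)) (X Y : Matrix (Fin l) (Fin m) ℝ) :
    act σ (X - Y) = act σ X - act σ Y := rfl

theorem fnorm_act (σ : Equiv.Perm (Fin l)) (A : Matrix (Fin l) (Fin m) ℝ) :
    fnorm (act σ A) = fnorm A := by
  unfold fnorm finner act
  rw [Equiv.sum_comp σ⁻¹ fun k => ∑ j, A k j * A k j]

theorem act_mem_orbit (σ : Equiv.Perm (Fin l)) (X : Matrix (Fin l) (Fin m) ℝ) :
    act σ X ∈ orbit X := ⟨σ, rfl⟩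

theorem mem_orbit_self (X : Matrix (Fin l) (Fin m) ℝ) : X ∈ orbit X :=
  act_mem_orbit 1 X

theorem act_mem_orbit_of_mem {X Y : Matrix (Fin l) (Fin m) ℝ} (σ : Equiv.Perm (Fin l))
    (hY : Y ∈ orbit X) : act σ Y ∈ orbit X := by
  obtain ⟨τ, rfl⟩ := hY
  exact act_mem_orbit (σ * τ) X

theorem pdist_orbit_le {X Y X' Y' : Matrix (Fin l) (Fin m) ℝ} (hX' : X' ∈ orbit X)
    (hY' : Y' ∈ orbit Y) : pdist (orbit X) (orbit Y) ≤ fnorm (X' - Y') :=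
  csInf_le ⟨0, by rintro _ ⟨_, _, _, _, rfl⟩; exact fnorm_nonneg _⟩ ⟨X', hX', Y', hY', rfl⟩

theorem exists_pdist_orbit_eq (X Y : Matrix (Fin l) (Fin m) ℝ) :
    ∃ X' ∈ orbit X, ∃ Y' ∈ orbit Y, pdist (orbit X) (orbit Y) = fnorm (X' - Y') := by
  let D := {d | ∃ X' ∈ orbit X, ∃ Y' ∈ orbit Y, d = fnorm (X' - Y')}
  have hD : D.Nonempty := ⟨_, X, mem_orbit_self X, Y, mem_orbit_self Y, rfl⟩
  have hfin : D.Finite := by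
    refine (Set.finite_range fun p : Equiv.Perm (Fin l) × Equiv.Perm (Fin l) =>
      fnorm (act p.1 X - act p.2 Y)).subset ?_
    rintro _ ⟨_, ⟨σ, rfl⟩, _, ⟨τ, rfl⟩, rfl⟩
    exact ⟨(σ, τ), rfl⟩
  exact hD.csInf_mem hfin

theorem exists_mem_orbit_pdist_orbit_eq (X Y : Matrix (Fin l) (Fin m) ℝ) :
    ∃ X' ∈ orbit X, pdist (orbit X) (orbit Y) = fnorm (X' - Y) := by
  obtain ⟨X', hX', _, ⟨τ, rfl⟩, hd⟩ := exists_pdist_orbit_eq X Y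
  refine ⟨act τ⁻¹ X', act_mem_orbit_of_mem τ⁻¹ hX', ?_⟩
  rw [hd, ← fnorm_act τ⁻¹, act_sub, act_act, inv_mul_cancel, act_one]

theorem pdist_orbit_sq_le {X Y X' Y' : Matrix (Fin l) (Fin m) ℝ} (hX' : X' ∈ orbit X)
    (hY' : Y' ∈ orbit Y) : pdist (orbit X) (orbit Y) ^ 2 ≤ fnorm (X' - Y') ^ 2 := by
  obtain ⟨X'', _, hd⟩ := exists_mem_orbit_pdist_orbit_eq X Y
  have : 0 ≤ pdist (orbit X) (orbit Y) := hd ▸ fnorm_nonneg _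
  exact pow_le_pow_left₀ this (pdist_orbit_le hX' hY') 2

end Orbit

section LP

variable {l m : ℕ}

theorem convex_LP : Convex ℝ (LP l m) := by
  rintro X ⟨hX01, hXsum⟩ Y ⟨hY01, hYsum⟩ a b ha hb hab
  refine ⟨fun k j => ⟨?_, ?_⟩, fun j => ?_⟩
  · simp only [Matrix.add_apply, Matrix.smul_apply, smul_eq_mul]
    nlinarith [(hX01 k j).1, (hY01 k j).1]
  · simp only [Matrix.add_apply, Matrix.smul_apply, smul_eq_mul]
    nlinarith [(hX01 k j).2, (hY01 k j).2]
  · simp only [Matrix.add_apply, Matrix.smul_apply, smul_eq_mul, sum_add_distrib, ← mul_sum,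
      hXsum, hYsum, hab, mul_one]

theorem act_mem_LP {X : Matrix (Fin l) (Fin m) ℝ} (σ : Equiv.Perm (Fin l)) (hX : X ∈ LP l m) :
    act σ X ∈ LP l m :=
  ⟨fun _ j => hX.1 _ j, fun j => (Equiv.sum_comp σ⁻¹ fun k => X k j).trans (hX.2 j)⟩

theorem orbit_subset_LP {X : Matrix (Fin l) (Fin m) ℝ} (hX : X ∈ LP l m) : orbit X ⊆ LP l m := by
  rintro _ ⟨σ, rfl⟩
  exact act_mem_LP σ hX

theorem mean_mem_LP {n : ℕ} [NeZero n] {A : Fin n → Matrix (Fin l) (Fin m) ℝ}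
    (hA : ∀ i, A i ∈ LP l m) : mean A ∈ LP l m := by
  rw [mean, smul_sum]
  refine convex_LP.sum_mem (fun _ _ => by positivity) ?_ fun i _ => hA i
  rw [sum_const, card_univ, Fintype.card_fin, nsmul_eq_mul, mul_inv_cancel₀ (NeZero.ne _)]

end LP

section Alignment

variable {l m n : ℕ} {X : Fin n → Matrix (Fin l) (Fin m) ℝ}

theorem sum_pdist_sq_mean_le {A : Fin n → Matrix (Fin l) (Fin m) ℝ}
    (hA : ∀ i, A i ∈ orbit (X i)) :
    ∑ i, pdist (orbit (X i)) (orbit (mean A)) ^ 2 ≤ ∑ i, fnorm (A i - mean A) ^ 2 :=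
  sum_le_sum fun i _ => pdist_orbit_sq_le (hA i) (mem_orbit_self _)

theorem exists_alignment_sum_fnorm_sq_eq (X : Fin n → Matrix (Fin l) (Fin m) ℝ)
    (Z : Matrix (Fin l) (Fin m) ℝ) :
    ∃ B : Fin n → Matrix (Fin l) (Fin m) ℝ, (∀ i, B i ∈ orbit (X i)) ∧
      ∑ i, fnorm (B i - Z) ^ 2 = ∑ i, pdist (orbit (X i)) (orbit Z) ^ 2 := by
  choose B hB hd using fun i => exists_mem_orbit_pdist_orbit_eq (X i) Z
  exact ⟨B, hB, sum_congr rfl fun i _ => by rw [hd]⟩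

theorem sum_pdist_sq_mean_le_of_forall_le [NeZero n] {A : Fin n → Matrix (Fin l) (Fin m) ℝ}
    (hA : ∀ i, A i ∈ orbit (X i))
    (hmin : ∀ B : Fin n → Matrix (Fin l) (Fin m) ℝ, (∀ i, B i ∈ orbit (X i)) →
      ∑ i, fnorm (A i - mean A) ^ 2 ≤ ∑ i, fnorm (B i - mean B) ^ 2)
    (Z : Matrix (Fin l) (Fin m) ℝ) :
    ∑ i, pdist (orbit (X i)) (orbit (mean A)) ^ 2 ≤ ∑ i, pdist (orbit (X i)) (orbit Z) ^ 2 := by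
  obtain ⟨B, hB, hBZ⟩ := exists_alignment_sum_fnorm_sq_eq X Z
  calc ∑ i, pdist (orbit (X i)) (orbit (mean A)) ^ 2
      ≤ ∑ i, fnorm (A i - mean A) ^ 2 := sum_pdist_sq_mean_le hA
    _ ≤ ∑ i, fnorm (B i - mean B) ^ 2 := hmin B hB
    _ ≤ ∑ i, fnorm (B i - Z) ^ 2 := sum_fnorm_sub_mean_sq_le B Z
    _ = ∑ i, pdist (orbit (X i)) (orbit Z) ^ 2 := hBZ

theorem exists_alignment_of_forall_le [NeZero n] (hX : ∀ i, X i ∈ LP l m) {M : Matrix (Fin l) (Fin m) ℝ}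
    (hM : ∀ Z ∈ LP l m,
      ∑ i, pdist (orbit (X i)) (orbit M) ^ 2 ≤ ∑ i, pdist (orbit (X i)) (orbit Z) ^ 2) :
    ∃ A : Fin n → Matrix (Fin l) (Fin m) ℝ, (∀ i, A i ∈ orbit (X i)) ∧ mean A = M ∧
      ∀ B : Fin n → Matrix (Fin l) (Fin m) ℝ, (∀ i, B i ∈ orbit (X i)) →
        ∑ i, fnorm (A i - mean A) ^ 2 ≤ ∑ i, fnorm (B i - mean B) ^ 2 := by
  have hmeanLP {B : Fin n → Matrix (Fin l) (Fin m) ℝ} (hB : ∀ i, B i ∈ orbit (X i)) :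
      mean B ∈ LP l m :=
    mean_mem_LP fun i => orbit_subset_LP (hX i) (hB i)
  obtain ⟨A, hA, hAM⟩ := exists_alignment_sum_fnorm_sq_eq X M
  have hscatter : ∑ i, fnorm (A i - mean A) ^ 2 ≤ ∑ i, pdist (orbit (X i)) (orbit M) ^ 2 :=
    hAM ▸ sum_fnorm_sub_mean_sq_le A M
  refine ⟨A, hA, ?_, fun B hB => ?_⟩
  · have hmeanA := (hM _ (hmeanLP hA)).trans (sum_pdist_sq_mean_le hA)
    have hdefect : (n : ℝ) * fnorm (mean A - M) ^ 2 = 0 :=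
      le_antisymm (by linarith [sum_fnorm_sub_sq A M]) (by positivity)
    rw [mul_eq_zero, pow_eq_zero_iff two_ne_zero, fnorm_eq_zero, sub_eq_zero] at hdefect
    exact hdefect.resolve_left (NeZero.ne _)
  · exact hscatter.trans ((hM _ (hmeanLP hB)).trans (sum_pdist_sq_mean_le hB))

end Alignment

theorem mean_partition_iff_optimal_alignment (l m n : ℕ) (hn : 0 < n)
    (X : Fin n → Matrix (Fin l) (Fin m) ℝ) (hX : ∀ i, X i ∈ LP l m) :
    (∀ A : Fin n → Matrix (Fin l) (Fin m) ℝ, (∀ i, A i ∈ orbit (X i)) →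
      (∀ B : Fin n → Matrix (Fin l) (Fin m) ℝ, (∀ i, B i ∈ orbit (X i)) →
        ((n : ℝ) ^ 2)⁻¹ * ∑ i, ∑ j, (fnorm (A i - A j)) ^ 2 ≤
        ((n : ℝ) ^ 2)⁻¹ * ∑ i, ∑ j, (fnorm (B i - B j)) ^ 2) →
      ∀ Z ∈ LP l m,
        (n : ℝ)⁻¹ * ∑ i, (pdist (orbit (X i)) (orbit ((n : ℝ)⁻¹ • ∑ j, A j))) ^ 2 ≤
        (n : ℝ)⁻¹ * ∑ i, (pdist (orbit (X i)) (orbit Z)) ^ 2) ∧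
    (∀ M ∈ LP l m,
      (∀ Z ∈ LP l m,
        (n : ℝ)⁻¹ * ∑ i, (pdist (orbit (X i)) (orbit M)) ^ 2 ≤
        (n : ℝ)⁻¹ * ∑ i, (pdist (orbit (X i)) (orbit Z)) ^ 2) →
      ∃ A : Fin n → Matrix (Fin l) (Fin m) ℝ, (∀ i, A i ∈ orbit (X i)) ∧
        (∀ B : Fin n → Matrix (Fin l) (Fin m) ℝ, (∀ i, B i ∈ orbit (X i)) →
          ((n : ℝ) ^ 2)⁻¹ * ∑ i, ∑ j, (fnorm (A i - A j)) ^ 2 ≤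
          ((n : ℝ) ^ 2)⁻¹ * ∑ i, ∑ j, (fnorm (B i - B j)) ^ 2) ∧
        orbit ((n : ℝ)⁻¹ • ∑ j, A j) = orbit M) := by
  have : NeZero n := ⟨hn.ne'⟩
  have hcost (A B : Fin n → Matrix (Fin l) (Fin m) ℝ) :
      ((n : ℝ) ^ 2)⁻¹ * ∑ i, ∑ j, fnorm (A i - A j) ^ 2 ≤
        ((n : ℝ) ^ 2)⁻¹ * ∑ i, ∑ j, fnorm (B i - B j) ^ 2 ↔
      ∑ i, fnorm (A i - mean A) ^ 2 ≤ ∑ i, fnorm (B i - mean B) ^ 2 := by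
    rw [alignment_cost_eq, alignment_cost_eq]
    exact mul_le_mul_iff_right₀ (by positivity)
  have hfrechet (M Z : Matrix (Fin l) (Fin m) ℝ) :
      (n : ℝ)⁻¹ * ∑ i, pdist (orbit (X i)) (orbit M) ^ 2 ≤
        (n : ℝ)⁻¹ * ∑ i, pdist (orbit (X i)) (orbit Z) ^ 2 ↔
      ∑ i, pdist (orbit (X i)) (orbit M) ^ 2 ≤ ∑ i, pdist (orbit (X i)) (orbit Z) ^ 2 :=
    mul_le_mul_iff_right₀ (by positivity)
  refine ⟨fun A hA hopt Z _ => ?_, fun M _ hM => ?_⟩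
  · exact (hfrechet _ Z).2 <|
      sum_pdist_sq_mean_le_of_forall_le hA (fun B hB => (hcost A B).1 (hopt B hB)) Z
  · obtain ⟨A, hA, hAM, hmin⟩ :=
      exists_alignment_of_forall_le hX fun Z hZ => (hfrechet M Z).1 (hM Z hZ)
    exact ⟨A, hA, fun B hB => (hcost A B).2 (hmin B hB), congrArg orbit hAM⟩
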